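/- arXiv:2604.01263 — 6 statements merged into one kernel-verified Lean document; each statement's English description precedes it below -/
import Mathlib

section
/- If the Gibbs distribution is supported on {0} ∪ [1,∞), c_0 > 0, and z'(β) ≤ 1/2, then z(β) - log c_0 ≤ 2 z'(β), i.e., log(Z(β)/c_0) ≤ 2·E_{X∼μ_β}[X]. -/
open Real Finset

/-!
Let `p` be the Gibbs mass of the nonzero atoms. Since every nonzero atom is at least `1`, the mean
dominates `p`, so `p ≤ 1/2`; and `Z(β)/c₀ = 1/(1 - p)`. The claim is then the elementary bound
`-log (1 - p) ≤ p / (1 - p) ≤ 2p` for `0 ≤ p ≤ 1/2`.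
-/

theorem Real.neg_log_one_sub_le_two_mul {p : ℝ} (hp₀ : 0 ≤ p) (hp : p ≤ 1 / 2) :
    -log (1 - p) ≤ 2 * p := by
  have hq : 0 < 1 - p := by linarith
  have key : 1 - (1 - p)⁻¹ ≤ log (1 - p) := one_sub_inv_le_log_of_pos hq
  have : (1 - p)⁻¹ - 1 ≤ 2 * p := by
    rw [inv_eq_one_div, div_sub_one hq.ne', div_le_iff₀ hq]
    nlinarith
  linarith

theorem Finset.sum_erase_zero_le_sum_mul {S : Finset ℝ} (hS : ∀ x ∈ S, x = 0 ∨ 1 ≤ x)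
    {w : ℝ → ℝ} (hw : ∀ x ∈ S, 0 ≤ w x) :
    ∑ x ∈ S.erase 0, w x ≤ ∑ x ∈ S, x * w x :=
  calc ∑ x ∈ S.erase 0, w x
      ≤ ∑ x ∈ S.erase 0, x * w x := sum_le_sum fun x hx =>
        le_mul_of_one_le_left (hw x (mem_of_mem_erase hx))
          ((hS x (mem_of_mem_erase hx)).resolve_left (ne_of_mem_erase hx))
    _ = ∑ x ∈ S, x * w x := sum_erase _ (zero_mul _)

/-- if the support is in {0} ∪ [1,∞), c₀ > 0 and z'(β) ≤ 1/2, then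
    log(Z(β)/c₀) ≤ 2 z'(β). -/
theorem gibbs_log_ratio_le_two_mean
    (S : Finset ℝ) (hS0 : (0 : ℝ) ∈ S) (hS : ∀ x ∈ S, x = 0 ∨ 1 ≤ x)
    (c : ℝ → ℝ) (hc : ∀ x ∈ S, 0 < c x)
    (Z : ℝ → ℝ) (hZ : ∀ β, Z β = ∑ x ∈ S, c x * Real.exp (β * x))
    (z : ℝ → ℝ) (hz : ∀ β, z β = Real.log (Z β))
    (z' : ℝ → ℝ)
    (hz' : ∀ β, z' β = ∑ x ∈ S, x * (c x * Real.exp (β * x) / Z β))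
    (β : ℝ) (hhalf : z' β ≤ 1 / 2) :
    z β - Real.log (c 0) ≤ 2 * z' β := by
  have hc₀ : 0 < c 0 := hc 0 hS0
  have hweight : ∀ x ∈ S, 0 < c x * exp (β * x) := fun x hx => mul_pos (hc x hx) (exp_pos _)
  set B := ∑ x ∈ S.erase 0, c x * exp (β * x)
  have hB : 0 ≤ B := sum_nonneg fun x hx => (hweight x (mem_of_mem_erase hx)).le
  have hZB : Z β = c 0 + B := by rw [hZ, ← add_sum_erase _ _ hS0, mul_zero, exp_zero, mul_one]
  have hZpos : 0 < Z β := by linarith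
  have hmass : B / Z β ≤ z' β := by
    rw [hz', sum_div]
    exact sum_erase_zero_le_sum_mul hS fun x hx => (div_pos (hweight x hx) hZpos).le
  have hmass_zero : 1 - B / Z β = c 0 / Z β := by
    field_simp
    linarith
  calc z β - log (c 0) = -log (1 - B / Z β) := by
        rw [hmass_zero, hz, log_div hc₀.ne' hZpos.ne']
        ring
    _ ≤ 2 * (B / Z β) := neg_log_one_sub_le_two_mul (by positivity) (hmass.trans hhalf)
    _ ≤ 2 * z' β := by linarith
end

section
/- For β₁ < β₂ with z'(β₁) > 0, the curvature satisfies κ(β₁,β₂) ≤ (z(β₂) - z(β₁)) · log(z'(β₂)/z'(β₁)). -/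
/-!
`z` is a log-sum-exp, hence convex: `z''` is a variance, nonnegative by Cauchy–Schwarz. For a
convex function the secant slopes `s₁ ≤ s₂` on the two halves of `[β₁, β₂]` lie between
`z'(β₁)` and `z'(β₂)`. With `h = (β₂ - β₁) / 2` and `m` the midpoint,
`κ = h (s₂ - s₁) ≤ h s₂ log (s₂ / s₁) ≤ (z β₂ - z m) log (z'(β₂) / z'(β₁))`
by `a - b ≤ a log (a / b)`, and `z m ≥ z β₁` because `s₁ > 0`.
-/

open Real Finset

theorem sub_le_mul_log_div {a b : ℝ} (ha : 0 < a) (hb : 0 < b) : a - b ≤ a * log (a / b) := by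
  have h := one_sub_inv_le_log_of_pos (div_pos ha hb)
  rw [inv_div] at h
  calc a - b = a * (1 - b / a) := by field_simp
    _ ≤ a * log (a / b) := by gcongr

theorem ConvexOn.second_difference_le_mul_log_deriv_div {S : Set ℝ} {f : ℝ → ℝ}
    (hf : ConvexOn ℝ S f) {a b : ℝ} (ha : a ∈ S) (hb : b ∈ S) (hab : a < b)
    (hfa : DifferentiableAt ℝ f a) (hfb : DifferentiableAt ℝ f b) (hpos : 0 < deriv f a) :
    f a - 2 * f ((a + b) / 2) + f b ≤ (f b - f a) * log (deriv f b / deriv f a) := by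
  set m := (a + b) / 2 with hm_def
  have ham : a < m := by linarith
  have hmb : m < b := by linarith
  have hm : m ∈ S := hf.1.ordConnected.out ha hb ⟨ham.le, hmb.le⟩
  have h₁ : deriv f a ≤ slope f a m := hf.deriv_le_slope ha hm ham hfa
  have h₂ : slope f a m ≤ slope f m b := by
    simpa only [slope_def_field] using hf.slope_mono_adjacent ha hb ham hmb
  have h₃ : slope f m b ≤ deriv f b := hf.slope_le_deriv hm hb hmb hfb
  have hs₁ : 0 < slope f a m := hpos.trans_le h₁
  have hs₂ : 0 < slope f m b := hs₁.trans_le h₂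
  have hlog : log (slope f m b / slope f a m) ≤ log (deriv f b / deriv f a) :=
    log_le_log (div_pos hs₂ hs₁) (div_le_div₀ (hs₂.trans_le h₃).le h₃ hpos h₁)
  have hlog_nonneg : 0 ≤ log (deriv f b / deriv f a) :=
    log_nonneg ((one_le_div hpos).2 (h₁.trans (h₂.trans h₃)))
  have hleft : f m - f a = (m - a) * slope f a m := by
    rw [slope_def_field]; field_simp [(sub_pos.2 ham).ne']
  have hright : f b - f m = (b - m) * slope f m b := by
    rw [slope_def_field]; field_simp [(sub_pos.2 hmb).ne']
  have hhalf : m - a = b - m := by linarith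
  calc f a - 2 * f m + f b = (b - m) * (slope f m b - slope f a m) := by
        linear_combination hright - hleft - slope f a m * hhalf
    _ ≤ (b - m) * (slope f m b * log (slope f m b / slope f a m)) := by
        gcongr; exact sub_le_mul_log_div hs₂ hs₁
    _ ≤ (b - m) * (slope f m b * log (deriv f b / deriv f a)) := by gcongr
    _ = (f b - f m) * log (deriv f b / deriv f a) := by rw [hright]; ring
    _ ≤ (f b - f a) * log (deriv f b / deriv f a) := by
        gcongr
        nlinarith [mul_pos (sub_pos.2 ham) hs₁]

section ExpSum

variable {ι : Type*} (s : Finset ι) (w x : ι → ℝ)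

noncomputable def expSum (β : ℝ) : ℝ := ∑ i ∈ s, w i * exp (β * x i)

theorem hasDerivAt_expSum (β : ℝ) : HasDerivAt (expSum s w x) (expSum s (w * x) x β) β := by
  unfold expSum
  refine HasDerivAt.fun_sum fun i _ => ?_
  exact ((((hasDerivAt_id' β).mul_const (x i)).exp).const_mul (w i)).congr_deriv (by
    simp only [Pi.mul_apply, one_mul]; ring)

variable {s w}

theorem expSum_pos (hs : s.Nonempty) (hw : ∀ i ∈ s, 0 < w i) (β : ℝ) : 0 < expSum s w x β :=
  sum_pos (fun i hi => mul_pos (hw i hi) (exp_pos _)) hs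

theorem sq_expSum_mul_le (hw : ∀ i ∈ s, 0 ≤ w i) (β : ℝ) :
    expSum s (w * x) x β ^ 2 ≤ expSum s w x β * expSum s (w * x * x) x β := by
  refine sum_sq_le_sum_mul_sum_of_sq_le_mul s (fun i hi => ?_) (fun i hi => ?_) fun i _ => ?_
  · exact mul_nonneg (hw i hi) (exp_pos _).le
  · simpa only [Pi.mul_apply, mul_assoc] using
      mul_nonneg (mul_nonneg (hw i hi) (mul_self_nonneg (x i))) (exp_pos (β * x i)).le
  · simp only [Pi.mul_apply]
    exact le_of_eq (by ring_nf)

end ExpSum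

section LogExpSum

variable {ι : Type*} {s : Finset ι} {w : ι → ℝ} (x : ι → ℝ)

theorem hasDerivAt_log_expSum (hs : s.Nonempty) (hw : ∀ i ∈ s, 0 < w i) (β : ℝ) :
    HasDerivAt (fun β => log (expSum s w x β)) (expSum s (w * x) x β / expSum s w x β) β :=
  (hasDerivAt_expSum s w x β).log (expSum_pos x hs hw β).ne'

theorem monotone_expSum_mul_div_expSum (hs : s.Nonempty) (hw : ∀ i ∈ s, 0 < w i) :
    Monotone fun β => expSum s (w * x) x β / expSum s w x β := by
  have hquot (β : ℝ) := (hasDerivAt_expSum s (w * x) x β).fun_div (hasDerivAt_expSum s w x β)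
    (expSum_pos x hs hw β).ne'
  refine monotone_of_deriv_nonneg (fun β => (hquot β).differentiableAt) fun β => ?_
  have hcs := sq_expSum_mul_le x (fun i hi => (hw i hi).le) β
  rw [(hquot β).deriv]
  exact div_nonneg (by nlinarith) (sq_nonneg _)

theorem convexOn_log_expSum (hs : s.Nonempty) (hw : ∀ i ∈ s, 0 < w i) :
    ConvexOn ℝ Set.univ fun β => log (expSum s w x β) := by
  have hderiv : deriv (fun β => log (expSum s w x β)) =
      fun β => expSum s (w * x) x β / expSum s w x β :=
    funext fun β => (hasDerivAt_log_expSum x hs hw β).deriv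
  exact Monotone.convexOn_univ_of_deriv
    (fun β => (hasDerivAt_log_expSum x hs hw β).differentiableAt)
    (hderiv ▸ monotone_expSum_mul_div_expSum x hs hw)

end LogExpSum

theorem curvature_le_width_mul_log_deriv_ratio_general
    (S : Finset ℝ) (hS : S.Nonempty)
    (c : ℝ → ℝ) (hc : ∀ x ∈ S, 0 < c x)
    (Z : ℝ → ℝ) (hZ : ∀ β, Z β = ∑ x ∈ S, c x * Real.exp (β * x))
    (z : ℝ → ℝ) (hz : ∀ β, z β = Real.log (Z β))
    (β₁ β₂ : ℝ) (hβ : β₁ < β₂) (hpos : 0 < deriv z β₁) :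
    z β₁ - 2 * z ((β₁ + β₂) / 2) + z β₂
      ≤ (z β₂ - z β₁) * Real.log (deriv z β₂ / deriv z β₁) := by
  obtain rfl : z = fun β => log (expSum S c id β) := funext fun β => by rw [hz, hZ]; rfl
  have hdiff (β : ℝ) := (hasDerivAt_log_expSum id hS hc β).differentiableAt
  exact (convexOn_log_expSum id hS hc).second_difference_le_mul_log_deriv_div
    trivial trivial hβ (hdiff β₁) (hdiff β₂) hpos

/-- the curvature κ(β₁,β₂) is at most (z(β₂)-z(β₁))·log(z'(β₂)/z'(β₁)). -/
theorem curvature_le_width_mul_log_deriv_ratio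
    (S : Finset ℝ) (hS : S.Nonempty) (hSpos : ∀ x ∈ S, 0 ≤ x)
    (c : ℝ → ℝ) (hc : ∀ x ∈ S, 0 < c x)
    (Z : ℝ → ℝ) (hZ : ∀ β, Z β = ∑ x ∈ S, c x * Real.exp (β * x))
    (z : ℝ → ℝ) (hz : ∀ β, z β = Real.log (Z β))
    (β₁ β₂ : ℝ) (hβ : β₁ < β₂) (hpos : 0 < deriv z β₁) :
    z β₁ - 2 * z ((β₁ + β₂) / 2) + z β₂
      ≤ (z β₂ - z β₁) * Real.log (deriv z β₂ / deriv z β₁) :=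
  curvature_le_width_mul_log_deriv_ratio_general S hS c hc Z hZ z hz β₁ β₂ hβ hpos
end

section
/- Let β₁ < β₂ with z'(β₁) > 0, let α = (β₁+β₂)/2 and v = z'(β₂)/z'(β₁) with 1 ≤ v ≤ e. Then (κ(β₁,β₂))/(z(β₂)-z(β₁)) ≤ (v-1)/2 ≤ log v. -/
open Real

/-! The tangent-line bounds at the two endpoints and the midpoint give
`κ ≤ (z'(β₂) - z'(β₁)) (β₂ - β₁) / 2 = (v - 1) z'(β₁) (β₂ - β₁) / 2 ≤ (v - 1) (z(β₂) - z(β₁)) / 2`.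
The bound `(v - 1) / 2 ≤ log v` on `[1, e]` holds because the concave `log` lies above its chord
from `(1, 0)` to `(e, 1)`, whose slope `1 / (e - 1)` exceeds `1 / 2`. -/

theorem Real.sub_one_div_exp_one_sub_one_le_log {v : ℝ} (hv1 : 1 ≤ v) (hve : v ≤ exp 1) :
    (v - 1) / (exp 1 - 1) ≤ log v := by
  have he : 0 < exp 1 - 1 := by linarith [add_one_lt_exp one_ne_zero]
  have hweights : (exp 1 - v) / (exp 1 - 1) + (v - 1) / (exp 1 - 1) = 1 := by
    field_simp; ring
  have hv : (exp 1 - v) / (exp 1 - 1) + (v - 1) / (exp 1 - 1) * exp 1 = v := by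
    field_simp; ring
  have hchord := strictConcaveOn_log_Ioi.concaveOn.2 (Set.mem_Ioi.2 one_pos)
    (Set.mem_Ioi.2 (exp_pos 1)) (div_nonneg (sub_nonneg.2 hve) he.le)
    (div_nonneg (sub_nonneg.2 hv1) he.le) hweights
  simp only [smul_eq_mul] at hchord
  simpa only [hv, log_one, log_exp, mul_zero, mul_one, zero_add] using hchord

theorem Real.half_sub_one_le_log {v : ℝ} (hv1 : 1 ≤ v) (hve : v ≤ exp 1) :
    (v - 1) / 2 ≤ log v :=
  calc (v - 1) / 2 ≤ (v - 1) / (exp 1 - 1) :=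
        div_le_div_of_nonneg_left (sub_nonneg.2 hv1)
          (by linarith [add_one_lt_exp one_ne_zero]) (by linarith [exp_one_lt_d9])
    _ ≤ log v := sub_one_div_exp_one_sub_one_le_log hv1 hve

theorem second_difference_le_of_tangent_bounds {z : ℝ → ℝ} {β₁ β₂ α d₁ d₂ : ℝ}
    (hα : α = (β₁ + β₂) / 2)
    (h₂ : z β₂ - z α ≤ d₂ * (β₂ - α)) (h₁ : d₁ * (α - β₁) ≤ z α - z β₁) :
    z β₁ - 2 * z α + z β₂ ≤ (d₂ - d₁) * (β₂ - β₁) / 2 := by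
  subst hα
  linarith

theorem curvature_ratio_le_half_v_sub_one_general
    (z : ℝ → ℝ) (β₁ β₂ α d₁ d₂ v : ℝ)
    (hβ : β₁ < β₂) (hα : α = (β₁ + β₂) / 2)
    (hd₁ : 0 < d₁)
    (hv : v = d₂ / d₁) (hv1 : 1 ≤ v) (hve : v ≤ Real.exp 1)
    (h1 : z β₂ - z α ≤ d₂ * (β₂ - α))
    (h2 : d₁ * (α - β₁) ≤ z α - z β₁)
    (h3 : d₁ * (β₂ - β₁) ≤ z β₂ - z β₁) :
    (z β₁ - 2 * z α + z β₂) / (z β₂ - z β₁) ≤ (v - 1) / 2 ∧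
      (v - 1) / 2 ≤ Real.log v := by
  have hd₂ : d₂ = v * d₁ := by rw [hv, div_mul_cancel₀ _ hd₁.ne']
  have hκ := second_difference_le_of_tangent_bounds hα h1 h2
  have hD : 0 < z β₂ - z β₁ := (mul_pos hd₁ (sub_pos.2 hβ)).trans_le h3
  refine ⟨?_, half_sub_one_le_log hv1 hve⟩
  rw [div_le_iff₀ hD]
  calc z β₁ - 2 * z α + z β₂ ≤ (v - 1) / 2 * (d₁ * (β₂ - β₁)) := by rw [hd₂] at hκ; linarith
    _ ≤ (v - 1) / 2 * (z β₂ - z β₁) := mul_le_mul_of_nonneg_left h3 (by linarith)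

/-- with α = (β₁+β₂)/2 and v = z'(β₂)/z'(β₁) ∈ [1,e], and the convexity
    inequalities from the tangent lines, κ(β₁,β₂)/(z(β₂)-z(β₁)) ≤ (v-1)/2 ≤ log v. -/
theorem curvature_ratio_le_half_v_sub_one
    (z : ℝ → ℝ) (β₁ β₂ α d₁ d₂ v : ℝ)
    (hβ : β₁ < β₂) (hα : α = (β₁ + β₂) / 2)
    (hd₁ : 0 < d₁)
    (hv : v = d₂ / d₁) (hv1 : 1 ≤ v) (hve : v ≤ Real.exp 1)
    (hzw : z β₁ < z β₂)
    (h1 : z β₂ - z α ≤ d₂ * (β₂ - α))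
    (h2 : d₁ * (α - β₁) ≤ z α - z β₁)
    (h3 : d₁ * (β₂ - β₁) ≤ z β₂ - z β₁) :
    (z β₁ - 2 * z α + z β₂) / (z β₂ - z β₁) ≤ (v - 1) / 2 ∧
      (v - 1) / 2 ≤ Real.log v :=
  curvature_ratio_le_half_v_sub_one_general z β₁ β₂ α d₁ d₂ v hβ hα hd₁ hv hv1 hve h1 h2 h3
end

section
/- If U₁,…,U_t are independent positive random variables with Var[U_i]/E[U_i]² = (e^{κ_i}-1)/k, then the product U = U₁⋯U_t satisfies Var[U]/E[U]² = -1 + ∏_i (1 + (e^{κ_i}-1)/k), and this is at most (e^{κ}-1)/k where κ = Σ_i κ_i, provided k ≥ 1 and κ_i ≥ 0. -/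
/-!
For independent factors the second moment is multiplicative, and `E[X²] / E[X]² = 1 + relVar X`,
so `1 + relVar` is multiplicative over independent factors. The bound follows by induction from
`(1 + a/k)(1 + b/k) ≤ 1 + (a + b + ab)/k` for `a, b ≥ 0` and `k ≥ 1`, applied with
`1 + a = eˣ` and `1 + b = eʸ`.
-/

open MeasureTheory ProbabilityTheory Finset

lemma integral_pos_of_forall_pos {Ω : Type*} [MeasurableSpace Ω] {μ : Measure Ω} [NeZero μ]
    {X : Ω → ℝ} (hpos : ∀ ω, 0 < X ω) (hint : Integrable X μ) : 0 < μ[X] := by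
  rw [integral_pos_iff_support_of_nonneg (fun ω => (hpos ω).le) hint,
    Function.support_eq_univ fun ω => (hpos ω).ne']
  exact Measure.measure_univ_pos.2 (NeZero.ne μ)

namespace ProbabilityTheory

variable {Ω ι : Type*} [MeasurableSpace Ω] {μ : Measure Ω}

noncomputable def relVar (X : Ω → ℝ) (μ : Measure Ω) : ℝ := Var[X; μ] / μ[X] ^ 2

lemma integral_sq_eq_one_add_relVar_mul_sq [IsProbabilityMeasure μ] {X : Ω → ℝ}
    (hX : MemLp X 2 μ) (hmean : μ[X] ≠ 0) :
    ∫ ω, X ω ^ 2 ∂μ = (1 + relVar X μ) * μ[X] ^ 2 := by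
  have hvar : Var[X; μ] = ∫ ω, X ω ^ 2 ∂μ - μ[X] ^ 2 := variance_eq_sub hX
  rw [relVar, hvar]
  field_simp
  ring

lemma iIndepFun.integrable_finset_prod {X : ι → Ω → ℝ} (hX : iIndepFun X μ)
    (hint : ∀ i, Integrable (X i) μ) (s : Finset ι) :
    Integrable (∏ i ∈ s, X i) μ := by
  have := hX.isProbabilityMeasure
  classical
  induction s using Finset.induction_on with
  | empty => exact integrable_const (1 : ℝ)
  | insert i s hi ih =>
    rw [prod_insert hi]
    exact (hX.indepFun_finsetProd_of_notMem₀ (fun j => (hint j).aemeasurable) hi).symm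
      |>.integrable_mul (hint i) ih

lemma iIndepFun.memLp_two_prod [Fintype ι] {X : ι → Ω → ℝ} (hX : iIndepFun X μ)
    (hX2 : ∀ i, MemLp (X i) 2 μ) :
    MemLp (fun ω => ∏ i, X i ω) 2 μ := by
  have hsq : iIndepFun (fun i ω => X i ω ^ 2) μ :=
    hX.comp (fun _ x => x ^ 2) (fun _ => measurable_id.pow_const 2)
  refine (memLp_two_iff_integrable_sq
    (aestronglyMeasurable_fun_prod _ fun i _ => (hX2 i).aestronglyMeasurable)).2 ?_
  simpa [← prod_pow, prod_fn] using hsq.integrable_finset_prod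
    (fun i => (memLp_two_iff_integrable_sq (hX2 i).aestronglyMeasurable).1 (hX2 i)) univ

theorem iIndepFun.one_add_relVar_prod [Fintype ι] {X : ι → Ω → ℝ} (hX : iIndepFun X μ)
    (hX2 : ∀ i, MemLp (X i) 2 μ) (hmean : ∀ i, μ[X i] ≠ 0) :
    1 + relVar (fun ω => ∏ i, X i ω) μ = ∏ i, (1 + relVar (X i) μ) := by
  have := hX.isProbabilityMeasure
  have hmean_prod : ∫ ω, ∏ i, X i ω ∂μ = ∏ i, μ[X i] :=
    hX.integral_fun_prod_eq_prod_integral fun i => (hX2 i).aestronglyMeasurable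
  have hsecond_prod : ∫ ω, (∏ i, X i ω) ^ 2 ∂μ = ∏ i, ∫ ω, X i ω ^ 2 ∂μ := by
    simp_rw [← prod_pow]
    exact hX.integral_fun_prod_comp (f := fun _ x => x ^ 2)
      (fun i => (hX2 i).aestronglyMeasurable.aemeasurable) (fun _ => by fun_prop)
  have hne : ∫ ω, ∏ i, X i ω ∂μ ≠ 0 :=
    hmean_prod ▸ prod_ne_zero_iff.2 fun i _ => hmean i
  have key := integral_sq_eq_one_add_relVar_mul_sq (hX.memLp_two_prod hX2) hne
  rw [hsecond_prod, hmean_prod, ← prod_pow] at key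
  simp_rw [fun i => integral_sq_eq_one_add_relVar_mul_sq (hX2 i) (hmean i),
    prod_mul_distrib] at key
  exact (mul_right_cancel₀ (prod_ne_zero_iff.2 fun i _ => pow_ne_zero 2 (hmean i)) key).symm

end ProbabilityTheory

section Exp

open Real

lemma one_add_exp_sub_one_div_mul_le {k x y : ℝ} (hk : 1 ≤ k) (hx : 0 ≤ x) (hy : 0 ≤ y) :
    (1 + (exp x - 1) / k) * (1 + (exp y - 1) / k) ≤ 1 + (exp (x + y) - 1) / k := by
  have ha : 0 ≤ exp x - 1 := by simpa using hx
  have hb : 0 ≤ exp y - 1 := by simpa using hy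
  have hk0 : 0 < k := by linarith
  have hcross : (exp x - 1) * (exp y - 1) / k ≤ (exp x - 1) * (exp y - 1) :=
    div_le_self (mul_nonneg ha hb) hk
  calc (1 + (exp x - 1) / k) * (1 + (exp y - 1) / k)
      = 1 + ((exp x - 1) + (exp y - 1) + (exp x - 1) * (exp y - 1) / k) / k := by
        field_simp
        ring
    _ ≤ 1 + ((exp x - 1) + (exp y - 1) + (exp x - 1) * (exp y - 1)) / k := by gcongr
    _ = 1 + (exp (x + y) - 1) / k := by
        rw [exp_add]
        ring

lemma prod_one_add_exp_sub_one_div_le {ι : Type*} {k : ℝ} (hk : 1 ≤ k) {κ : ι → ℝ}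
    (hκ : ∀ i, 0 ≤ κ i) (s : Finset ι) :
    ∏ i ∈ s, (1 + (exp (κ i) - 1) / k) ≤ 1 + (exp (∑ i ∈ s, κ i) - 1) / k := by
  classical
  induction s using Finset.induction_on with
  | empty => simp
  | insert i s hi ih =>
    rw [prod_insert hi, sum_insert hi]
    calc (1 + (exp (κ i) - 1) / k) * ∏ j ∈ s, (1 + (exp (κ j) - 1) / k)
        ≤ (1 + (exp (κ i) - 1) / k) * (1 + (exp (∑ j ∈ s, κ j) - 1) / k) := by
          have : 0 ≤ exp (κ i) - 1 := by simpa using hκ i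
          gcongr
      _ ≤ _ := one_add_exp_sub_one_div_mul_le hk (hκ i) (sum_nonneg fun j _ => hκ j)

end Exp

theorem relvar_of_product_general
    {Ω : Type*} [MeasurableSpace Ω] (μ : Measure Ω) [IsProbabilityMeasure μ]
    (t : ℕ) (U : Fin t → Ω → ℝ)
    (hUpos : ∀ i ω, 0 < U i ω)
    (hUsq : ∀ i, MemLp (U i) 2 μ)
    (hindep : iIndepFun (m := fun _ : Fin t => (inferInstance : MeasurableSpace ℝ)) U μ)
    (k : ℝ) (hk : 1 ≤ k) (κ : Fin t → ℝ) (hκ : ∀ i, 0 ≤ κ i)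
    (hrelvar : ∀ i, variance (U i) μ = (Real.exp (κ i) - 1) / k * (∫ ω, U i ω ∂μ) ^ 2) :
    variance (fun ω => ∏ i, U i ω) μ / (∫ ω, ∏ i, U i ω ∂μ) ^ 2
        = -1 + ∏ i, (1 + (Real.exp (κ i) - 1) / k) ∧
      -1 + ∏ i, (1 + (Real.exp (κ i) - 1) / k)
        ≤ (Real.exp (∑ i, κ i) - 1) / k := by
  have hmean : ∀ i, ∫ ω, U i ω ∂μ ≠ 0 := fun i =>
    (integral_pos_of_forall_pos (hUpos i) ((hUsq i).integrable one_le_two)).ne'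
  have hrelVar : ∀ i, relVar (U i) μ = (Real.exp (κ i) - 1) / k := fun i => by
    rw [relVar, hrelvar i, mul_div_cancel_right₀ _ (pow_ne_zero 2 (hmean i))]
  have hprod := hindep.one_add_relVar_prod hUsq hmean
  simp only [hrelVar] at hprod
  refine ⟨?_, ?_⟩
  · change relVar _ μ = _
    linarith
  · linarith [prod_one_add_exp_sub_one_div_le hk hκ univ]

/-- relative variance of a product of independent positive random
    variables with relative variance (e^{κᵢ}-1)/k each. -/
theorem relvar_of_product
    {Ω : Type*} [MeasurableSpace Ω] (μ : Measure Ω) [IsProbabilityMeasure μ]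
    (t : ℕ) (U : Fin t → Ω → ℝ)
    (hUpos : ∀ i ω, 0 < U i ω)
    (hUmeas : ∀ i, Measurable (U i))
    (hUsq : ∀ i, MemLp (U i) 2 μ)
    (hindep : iIndepFun (m := fun _ : Fin t => (inferInstance : MeasurableSpace ℝ)) U μ)
    (k : ℝ) (hk : 1 ≤ k) (κ : Fin t → ℝ) (hκ : ∀ i, 0 ≤ κ i)
    (hrelvar : ∀ i, variance (U i) μ = (Real.exp (κ i) - 1) / k * (∫ ω, U i ω ∂μ) ^ 2) :
    variance (fun ω => ∏ i, U i ω) μ / (∫ ω, ∏ i, U i ω ∂μ) ^ 2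
        = -1 + ∏ i, (1 + (Real.exp (κ i) - 1) / k) ∧
      -1 + ∏ i, (1 + (Real.exp (κ i) - 1) / k)
        ≤ (Real.exp (∑ i, κ i) - 1) / k :=
  relvar_of_product_general μ t U hUpos hUsq hindep k hk κ hκ hrelvar
end

section
/- If a random variable W satisfies W ≤ r almost surely and P[W > s] ≤ (1 - e^{-r}(e^s - 1))^k for all s ∈ [0, r·], where 1 - e^{-r}(e^s-1) ≤ e^{-s e^{-r}}, then E[W] ≤ e^r / k. -/
/-!
By the layer-cake formula `E[W] = ∫_{s > 0} P[W > s] ds`. Since `e^s - 1 ≥ s` and `1 + a ≤ e^a`,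
the tail bound is at most `e^{-k e^{-r} s}` on `[0, r]`, and the tail vanishes beyond `r`;
integrating the exponential gives `e^r / k`.
-/

open MeasureTheory Set

lemma Real.one_sub_exp_neg_mul_exp_sub_one_le (r s : ℝ) :
    1 - Real.exp (-r) * (Real.exp s - 1) ≤ Real.exp (-Real.exp (-r) * s) := by
  have hs : s ≤ Real.exp s - 1 := by linarith [Real.add_one_le_exp s]
  calc 1 - Real.exp (-r) * (Real.exp s - 1)
      ≤ -Real.exp (-r) * s + 1 := by nlinarith [Real.exp_pos (-r)]
    _ ≤ Real.exp (-Real.exp (-r) * s) := Real.add_one_le_exp _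

lemma Real.one_sub_exp_neg_mul_exp_sub_one_nonneg {r s : ℝ} (hsr : s ≤ r) :
    0 ≤ 1 - Real.exp (-r) * (Real.exp s - 1) := by
  have h : Real.exp (-r) * Real.exp s ≤ 1 := by
    rw [← Real.exp_add]
    exact Real.exp_le_one_iff.mpr (by linarith)
  nlinarith [Real.exp_pos (-r)]

lemma integral_exp_neg_mul_Ioi_zero {b : ℝ} (hb : 0 < b) :
    ∫ t in Ioi (0 : ℝ), Real.exp (-b * t) = b⁻¹ := by
  rw [integral_exp_mul_Ioi (neg_lt_zero.mpr hb), mul_zero, Real.exp_zero, neg_div_neg_eq,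
    one_div]

lemma integral_le_inv_of_measureReal_lt_le_exp {α : Type*} [MeasurableSpace α] {μ : Measure α}
    {X : α → ℝ} (hX : Integrable X μ) (hX0 : 0 ≤ᵐ[μ] X) {b : ℝ} (hb : 0 < b)
    (htail : ∀ t, 0 < t → μ.real {a | t < X a} ≤ Real.exp (-b * t)) :
    ∫ a, X a ∂μ ≤ b⁻¹ := by
  rw [hX.integral_eq_integral_meas_lt hX0, ← integral_exp_neg_mul_Ioi_zero hb]
  refine integral_mono_of_nonneg (ae_of_all _ fun t => measureReal_nonneg)
    (exp_neg_integrableOn_Ioi 0 hb) ?_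
  filter_upwards [ae_restrict_mem measurableSet_Ioi] with t ht using htail t ht

theorem expectation_le_exp_div_k_general
    {Ω : Type*} [MeasurableSpace Ω] (μ : Measure Ω) [IsProbabilityMeasure μ]
    (W : Ω → ℝ) (hWmeas : Measurable W)
    (r : ℝ) (hW0 : ∀ ω, 0 ≤ W ω) (hWr : ∀ ω, W ω ≤ r)
    (k : ℕ) (hk : 1 ≤ k)
    (htail : ∀ s ∈ Set.Icc (0 : ℝ) r,
      (μ {ω | s < W ω}).toReal ≤ (1 - Real.exp (-r) * (Real.exp s - 1)) ^ k) :
    ∫ ω, W ω ∂μ ≤ Real.exp r / k := by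
  have hb : 0 < k * Real.exp (-r) := by positivity
  have hWint : Integrable W μ :=
    (integrable_const r).mono' hWmeas.aestronglyMeasurable
      (ae_of_all _ fun ω => by rw [Real.norm_of_nonneg (hW0 ω)]; exact hWr ω)
  have hexp_tail : ∀ s, 0 < s → μ.real {ω | s < W ω} ≤ Real.exp (-(k * Real.exp (-r)) * s) := by
    intro s hs
    rcases le_or_gt s r with hsr | hrs
    · calc μ.real {ω | s < W ω} ≤ (1 - Real.exp (-r) * (Real.exp s - 1)) ^ k :=
            htail s ⟨hs.le, hsr⟩
        _ ≤ Real.exp (-Real.exp (-r) * s) ^ k :=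
            pow_le_pow_left₀ (Real.one_sub_exp_neg_mul_exp_sub_one_nonneg hsr)
              (Real.one_sub_exp_neg_mul_exp_sub_one_le r s) k
        _ = Real.exp (-(k * Real.exp (-r)) * s) := by rw [← Real.exp_nat_mul]; ring_nf
    · have hempty : {ω | s < W ω} = ∅ :=
        eq_empty_of_forall_notMem fun ω hω => (hWr ω).not_gt (hrs.trans hω)
      rw [hempty, measureReal_empty]
      positivity
  calc ∫ ω, W ω ∂μ ≤ (k * Real.exp (-r))⁻¹ :=
        integral_le_inv_of_measureReal_lt_le_exp hWint (ae_of_all _ hW0) hb hexp_tail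
    _ = Real.exp r / k := by rw [mul_inv, Real.exp_neg, inv_inv, div_eq_inv_mul]

/-- if 0 ≤ W ≤ r and P[W > s] ≤ (1 - e^{-r}(e^s - 1))^k for s ∈ [0,r],
    then E[W] ≤ e^r / k. -/
theorem expectation_le_exp_div_k
    {Ω : Type*} [MeasurableSpace Ω] (μ : Measure Ω) [IsProbabilityMeasure μ]
    (W : Ω → ℝ) (hWmeas : Measurable W)
    (r : ℝ) (hr : 0 ≤ r) (hW0 : ∀ ω, 0 ≤ W ω) (hWr : ∀ ω, W ω ≤ r)
    (k : ℕ) (hk : 1 ≤ k)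
    (htail : ∀ s ∈ Set.Icc (0 : ℝ) r,
      (μ {ω | s < W ω}).toReal ≤ (1 - Real.exp (-r) * (Real.exp s - 1)) ^ k) :
    ∫ ω, W ω ∂μ ≤ Real.exp r / k :=
  expectation_le_exp_div_k_general μ W hWmeas r hW0 hWr k hk htail
end

section
/- In the ferromagnetic Ising model with external fields λ_v ∈ [0,1) and edge activities γ_e ≥ 1, the marginal probability that a vertex v takes spin +1 satisfies P[σ_v = +1] ≤ λ_v. -/
/-!
Writing each edge factor as `1 + (γ e - 1) * [σ agrees on e]` and expanding the product expresses
the Ising weight as a nonnegative combination, over edge sets `t`, of the field weights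
`∏_{σ u = +1} λ u` restricted to configurations constant on the connected components of `t`
(the random-cluster representation). For each `t` separately, resetting the component `K` of `v`
to `-1` is injective on `{σ v = +1}` and divides the field weight by `∏_{u ∈ K} λ u ≤ λ v`.
-/

open Finset

theorem prod_ite_eq_sum_powerset {ι R : Type*} [CommRing R] (s : Finset ι) (p : ι → Prop)
    [DecidablePred p] (γ : ι → R) :
    ∏ i ∈ s, (if p i then γ i else 1) =
      ∑ t ∈ s.powerset, (∏ i ∈ t, (γ i - 1)) * if ∀ i ∈ t, p i then 1 else 0 := by
  have hsplit : ∀ i, (if p i then γ i else 1) = 1 + (γ i - 1) * if p i then 1 else 0 := by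
    intro i
    split_ifs <;> ring
  simp_rw [hsplit, prod_one_add, prod_mul_distrib, prod_boole]

section FieldWeight

variable {V : Type*} [Fintype V]

def fieldWeight (lam : V → ℝ) (σ : V → Bool) : ℝ :=
  ∏ u ∈ univ.filter (fun u => σ u = true), lam u

theorem fieldWeight_nonneg {lam : V → ℝ} (h0 : ∀ u, 0 ≤ lam u) (σ : V → Bool) :
    0 ≤ fieldWeight lam σ :=
  prod_nonneg fun u _ => h0 u

theorem fieldWeight_eq_prod_mul [DecidableEq V] (lam : V → ℝ) {σ : V → Bool} {K : Finset V}
    (hK : ∀ u ∈ K, σ u = true) :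
    fieldWeight lam σ =
      (∏ u ∈ K, lam u) * fieldWeight lam (fun u => if u ∈ K then false else σ u) := by
  unfold fieldWeight
  rw [← prod_union]
  · congr 1
    ext u
    by_cases hu : u ∈ K <;> simp [hu, hK]
  · exact disjoint_left.2 fun u hu => by simp [hu]

theorem sum_filter_fieldWeight_le [DecidableEq V] {lam : V → ℝ} (h0 : ∀ u, 0 ≤ lam u)
    (h1 : ∀ u, lam u ≤ 1) (A : Finset (V → Bool)) (K : Finset V) {v : V} (hv : v ∈ K)
    (hK : ∀ σ ∈ A, σ v = true → ∀ u ∈ K, σ u = true)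
    (hA : ∀ σ ∈ A, (fun u => if u ∈ K then false else σ u) ∈ A) :
    ∑ σ ∈ A with σ v = true, fieldWeight lam σ ≤ lam v * ∑ σ ∈ A, fieldWeight lam σ := by
  set F : (V → Bool) → V → Bool := fun σ u => if u ∈ K then false else σ u
  have hK_le : ∏ u ∈ K, lam u ≤ lam v := by
    rw [← mul_prod_erase K lam hv]
    exact mul_le_of_le_one_right (h0 v) (prod_le_one (fun u _ => h0 u) fun u _ => h1 u)
  have hF_inj : Set.InjOn F (A.filter fun σ => σ v = true) := by
    intro σ hσ τ hτ hστ
    rw [mem_coe, mem_filter] at hσ hτ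
    funext u
    by_cases hu : u ∈ K
    · rw [hK σ hσ.1 hσ.2 u hu, hK τ hτ.1 hτ.2 u hu]
    · simpa [F, hu] using congrFun hστ u
  have hF_mem : (A.filter fun σ => σ v = true).image F ⊆ A :=
    image_subset_iff.2 fun σ hσ => hA σ (mem_filter.1 hσ).1
  calc ∑ σ ∈ A with σ v = true, fieldWeight lam σ
      ≤ ∑ σ ∈ A with σ v = true, lam v * fieldWeight lam (F σ) := by
        refine sum_le_sum fun σ hσ => ?_
        rw [mem_filter] at hσ
        rw [fieldWeight_eq_prod_mul lam (hK σ hσ.1 hσ.2)]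
        exact mul_le_mul_of_nonneg_right hK_le (fieldWeight_nonneg h0 _)
    _ = lam v * ∑ σ ∈ (A.filter fun σ => σ v = true).image F, fieldWeight lam σ := by
        rw [sum_image hF_inj, mul_sum]
    _ ≤ lam v * ∑ σ ∈ A, fieldWeight lam σ :=
        mul_le_mul_of_nonneg_left
          (sum_le_sum_of_subset_of_nonneg hF_mem fun σ _ _ => fieldWeight_nonneg h0 σ) (h0 v)

open Classical in
theorem sum_filter_fieldWeight_le_of_setoid [DecidableEq V] {lam : V → ℝ} (h0 : ∀ u, 0 ≤ lam u)
    (h1 : ∀ u, lam u ≤ 1) (r : Setoid V) (v : V) :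
    ∑ σ ∈ univ.filter (r ≤ Setoid.ker ·) with σ v = true, fieldWeight lam σ ≤
      lam v * ∑ σ with r ≤ Setoid.ker σ, fieldWeight lam σ := by
  refine sum_filter_fieldWeight_le h0 h1 _ (univ.filter (r · v)) (by simp) ?_ ?_
  · intro σ hσ hv u hu
    rw [mem_filter] at hσ hu
    exact (hσ.2 hu.2).trans hv
  · intro σ hσ
    rw [mem_filter] at hσ ⊢
    refine ⟨mem_univ _, fun x y hxy => ?_⟩
    have hxv : r x v ↔ r y v := ⟨r.trans (r.symm hxy), r.trans hxy⟩
    simp only [Setoid.ker_def, mem_filter, mem_univ, true_and, hxv]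
    split_ifs
    · rfl
    · exact hσ.2 hxy

end FieldWeight

/-- Its classes are the connected components of the spanning subgraph with edge set `t`. -/
def edgeSetoid {V E : Type*} (ends : E → V × V) (t : Finset E) : Setoid V :=
  Relation.EqvGen.setoid fun a b => ∃ e ∈ t, ends e = (a, b)

theorem edgeSetoid_le_ker_iff {V E : Type*} (ends : E → V × V) (t : Finset E) (σ : V → Bool) :
    edgeSetoid ends t ≤ Setoid.ker σ ↔ ∀ e ∈ t, σ (ends e).1 = σ (ends e).2 := by
  refine ⟨fun h e he => h (Relation.EqvGen.rel _ _ ⟨e, he, rfl⟩), fun h => Setoid.eqvGen_le ?_⟩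
  rintro a b ⟨e, he, hab⟩
  simpa [hab] using h e he

open Classical in
theorem sum_fieldWeight_mul_prod_eq_sum_powerset {V E : Type*} [Fintype V] [Fintype E]
    (lam : V → ℝ) (ends : E → V × V) (γ : E → ℝ) (P : Finset (V → Bool)) :
    ∑ σ ∈ P, fieldWeight lam σ * ∏ e, (if σ (ends e).1 = σ (ends e).2 then γ e else 1) =
      ∑ t ∈ univ.powerset, (∏ e ∈ t, (γ e - 1)) *
        ∑ σ ∈ P with edgeSetoid ends t ≤ Setoid.ker σ, fieldWeight lam σ := by
  simp_rw [prod_ite_eq_sum_powerset, mul_sum, ← edgeSetoid_le_ker_iff]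
  rw [sum_comm]
  refine sum_congr rfl fun t _ => ?_
  rw [sum_filter]
  refine sum_congr rfl fun σ _ => ?_
  split_ifs <;> ring

/-- in the ferromagnetic Ising model with edge activities γ_e ≥ 1 and
    external fields 0 ≤ λ_v < 1, the marginal P[σ_v = +1] is at most λ_v.
    The graph is given by a finite vertex type `V`, a finite edge type `E` and an
    endpoint map `ends`; a configuration `σ : V → Bool` has `σ u = true` meaning +1. -/
theorem ising_marginal_le_field
    (V E : Type*) [Fintype V] [Fintype E] [DecidableEq V]
    (ends : E → V × V)
    (γ : E → ℝ) (hγ : ∀ e, 1 ≤ γ e)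
    (lam : V → ℝ) (hlam0 : ∀ u, 0 ≤ lam u) (hlam1 : ∀ u, lam u < 1)
    (weight : (V → Bool) → ℝ)
    (hweight : ∀ σ, weight σ =
      (∏ u ∈ Finset.univ.filter (fun u => σ u = true), lam u) *
      ∏ e, (if σ (ends e).1 = σ (ends e).2 then γ e else 1))
    (v : V) :
    (∑ σ ∈ Finset.univ.filter (fun σ : V → Bool => σ v = true), weight σ) /
      (∑ σ : V → Bool, weight σ) ≤ lam v := by
  have hc : ∀ t : Finset E, 0 ≤ ∏ e ∈ t, (γ e - 1) :=
    fun t => prod_nonneg fun e _ => sub_nonneg.2 (hγ e)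
  have hweight' : ∀ σ, weight σ = fieldWeight lam σ *
      ∏ e, (if σ (ends e).1 = σ (ends e).2 then γ e else 1) := hweight
  simp_rw [hweight']
  rw [sum_fieldWeight_mul_prod_eq_sum_powerset, sum_fieldWeight_mul_prod_eq_sum_powerset]
  refine div_le_of_le_mul₀ (sum_nonneg fun t _ => mul_nonneg (hc t)
    (sum_nonneg fun σ _ => fieldWeight_nonneg hlam0 σ)) (hlam0 v) ?_
  rw [mul_sum]
  refine sum_le_sum fun t _ => ?_
  rw [filter_comm, mul_left_comm]
  exact mul_le_mul_of_nonneg_left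
    (sum_filter_fieldWeight_le_of_setoid hlam0 (fun u => (hlam1 u).le) _ v) (hc t)
end
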